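/- arXiv:0905.4798 — 3 statements merged into one kernel-verified Lean document; each statement's English description precedes it below -/
import Mathlib

section
/- Let Γ be a finite-index congruence subgroup of SL₂(ℤ) with general level N. Then Γ(2N) ≤ Γ; consequently the level of Γ (least M with Γ(M) ≤ Γ) is either N or 2N. -/
/-!
Since the width of every cusp g∞ divides the general level N, each ±g Tᴺ g⁻¹ lies in Γ, so Γ
contains every conjugate of T²ᴺ. Wohlfahrt's argument then shows: if Γ contains all conjugates
of Tⁿ and Γ(nq) for some q ≠ 0, it contains Γ(n). The factor q is removed one prime p at a time.
For p ∤ n, SL₂(𝔽ₚ) is generated by elementary matrices, which lift to elementary matrices with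
entries in nℤ; together with Γ(n) ∩ Γ(p) = Γ(np) this gives Γ(n) ≤ Γ. For p ∣ n one has
Γ(n²) ≤ Γ(np), and 1 + nB ↦ B mod n identifies Γ(n)/Γ(n²) with the trace-zero matrices mod n,
which are spanned by the images of three conjugates of powers of Tⁿ.

Finally, if Γ(L) ≤ Γ then every g Tᴸ g⁻¹ lies in Γ, so every cusp width, hence N, divides L; with
L ≤ 2N this leaves L ∈ {N, 2N}.
-/

open Matrix CongruenceSubgroup
open scoped MatrixGroups

/-- T = [[1,1],[0,1]]. -/
def T : SL(2, ℤ) := ⟨!![1, 1; 0, 1], by rw [Matrix.det_fin_two_of]; ring⟩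

/-- The width of the cusp g∞: the least n > 0 with ±g Tⁿ g⁻¹ ∈ Γ. -/
noncomputable def cuspWidth (Γ : Subgroup SL(2, ℤ)) (g : SL(2, ℤ)) : ℕ :=
  sInf {n : ℕ | 0 < n ∧ (g * T ^ n * g⁻¹ ∈ Γ ∨ -(g * T ^ n * g⁻¹) ∈ Γ)}

/-- N is the general level of Γ: the lcm of all cusp widths of Γ. -/
def IsGeneralLevel (Γ : Subgroup SL(2, ℤ)) (N : ℕ) : Prop :=
  0 < N ∧ (∀ g : SL(2, ℤ), cuspWidth Γ g ∣ N) ∧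
    ∀ m : ℕ, (∀ g : SL(2, ℤ), cuspWidth Γ g ∣ m) → N ∣ m

/-- A subgroup of SL₂(ℤ) is congruence if it contains Γ(M) for some M ≥ 1. -/
def IsCongruence (Γ : Subgroup SL(2, ℤ)) : Prop := ∃ M : ℕ, 0 < M ∧ Gamma M ≤ Γ

namespace Subgroup

variable {G : Type*} [Group G] [HasDistribNeg G]

def negClosure (H : Subgroup G) : Subgroup G where
  carrier := {x | x ∈ H ∨ -x ∈ H}
  one_mem' := .inl H.one_mem
  mul_mem' := by
    rintro x y (hx | hx) (hy | hy)
    · exact .inl (H.mul_mem hx hy)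
    · exact .inr (by simpa using H.mul_mem hx hy)
    · exact .inr (by simpa using H.mul_mem hx hy)
    · exact .inl (by simpa using H.mul_mem hx hy)
  inv_mem' := by
    rintro x (hx | hx)
    · exact .inl (H.inv_mem hx)
    · exact .inr (by simpa using H.inv_mem hx)

lemma sq_mem_of_mem_negClosure {H : Subgroup G} {x : G} (hx : x ∈ H.negClosure) : x ^ 2 ∈ H := by
  rcases hx with hx | hx
  · exact H.pow_mem hx 2
  · simpa using H.pow_mem hx 2

end Subgroup

lemma QuotientGroup.smul_mk_one_eq_iff {G : Type*} [Group G] {H : Subgroup G} {x : G} :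
    x • (mk 1 : G ⧸ H) = mk 1 ↔ x ∈ H := by
  rw [MulAction.Quotient.smul_mk, smul_eq_mul, mul_one, eq_comm, QuotientGroup.eq, inv_one,
    one_mul]

lemma cuspWidth_eq_period (Γ : Subgroup SL(2, ℤ)) (g : SL(2, ℤ)) :
    cuspWidth Γ g =
      MulAction.period (g * T * g⁻¹) (QuotientGroup.mk 1 : SL(2, ℤ) ⧸ Γ.negClosure) := by
  rw [MulAction.period_eq_minimalPeriod, Function.minimalPeriod_eq_sInf_n_pos_IsPeriodicPt,
    cuspWidth]
  simp only [MulAction.isPeriodicPt_smul_iff, QuotientGroup.smul_mk_one_eq_iff, conj_pow]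
  rfl

lemma conj_T_pow_mem_negClosure_iff {Γ : Subgroup SL(2, ℤ)} {g : SL(2, ℤ)} {n : ℕ} :
    g * T ^ n * g⁻¹ ∈ Γ.negClosure ↔ cuspWidth Γ g ∣ n := by
  rw [cuspWidth_eq_period, ← MulAction.pow_smul_eq_iff_period_dvd,
    QuotientGroup.smul_mk_one_eq_iff, conj_pow]

namespace Matrix.SpecialLinearGroup

variable {R S : Type*} [CommRing R] [CommRing S]

def upper (x : R) : SL(2, R) := ⟨!![1, x; 0, 1], by simp⟩

def lower (x : R) : SL(2, R) := ⟨!![1, 0; x, 1], by simp⟩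

lemma coe_upper (x : R) : (upper x : Matrix (Fin 2) (Fin 2) R) = !![1, x; 0, 1] := rfl

lemma coe_lower (x : R) : (lower x : Matrix (Fin 2) (Fin 2) R) = !![1, 0; x, 1] := rfl

lemma map_upper (f : R →+* S) (x : R) : map f (upper x) = upper (f x) := by
  ext i j; fin_cases i <;> fin_cases j <;> simp [coe_upper]

lemma map_lower (f : R →+* S) (x : R) : map f (lower x) = lower (f x) := by
  ext i j; fin_cases i <;> fin_cases j <;> simp [coe_lower]

lemma coe_upper_mul (r t : R) : (upper (r * t)).1 = 1 + r • !![0, t; 0, 0] := by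
  ext i j; fin_cases i <;> fin_cases j <;> simp [coe_upper]

lemma coe_lower_mul (r t : R) : (lower (r * t)).1 = 1 + r • !![0, 0; t, 0] := by
  ext i j; fin_cases i <;> fin_cases j <;> simp [coe_lower]

lemma coe_lower_one_conj_upper_mul (r t : R) :
    (lower 1 * upper (r * t) * (lower 1)⁻¹).1 = 1 + r • !![-t, t; -t, t] := by
  rw [coe_mul, coe_mul, coe_inv, coe_lower, coe_upper, adjugate_fin_two]
  ext i j; fin_cases i <;> fin_cases j <;> simp [mul_apply, Fin.sum_univ_two, add_comm]

@[simp]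
lemma lower_zero : lower (0 : R) = 1 := by
  ext i j; fin_cases i <;> fin_cases j <;> simp [coe_lower]

lemma lower_add (x y : R) : lower (x + y) = lower x * lower y := by
  ext i j; fin_cases i <;> fin_cases j <;> simp [coe_lower]

lemma upper_eq_T_zpow (k : ℤ) : upper k = T ^ k :=
  Subtype.ext (ModularGroup.coe_T_zpow k).symm

lemma lower_eq_S_mul_upper_mul_S_inv (x : ℤ) :
    lower x = ModularGroup.S * upper (-x) * ModularGroup.S⁻¹ := by
  rw [eq_mul_inv_iff_mul_eq]
  ext i j; fin_cases i <;> fin_cases j <;> simp [coe_lower, coe_upper, ModularGroup.coe_S]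

variable {K : Type*} [Field K]

lemma exists_eq_upper_mul_lower_mul_upper (A : SL(2, K)) (hc : A 1 0 ≠ 0) :
    ∃ x y z, A = upper x * lower y * upper z := by
  refine ⟨(A 0 0 - 1) / A 1 0, A 1 0, (A 1 1 - 1) / A 1 0, ?_⟩
  have hdet : A 0 0 * A 1 1 - A 0 1 * A 1 0 = 1 := by rw [← det_fin_two]; exact A.det_coe
  ext i j; fin_cases i <;> fin_cases j <;> simp [coe_lower, coe_upper] <;> field_simp
  · ring
  · linear_combination -hdet
  · ring

lemma exists_eq_lower_mul_upper_mul_lower_mul_upper (A : SL(2, K)) :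
    ∃ w x y z, A = lower w * upper x * lower y * upper z := by
  obtain ⟨w, hw⟩ : ∃ w, (lower w * A : SL(2, K)) 1 0 ≠ 0 := by
    by_cases hc : A 1 0 = 0
    · refine ⟨1, ?_⟩
      have hdet : A 0 0 * A 1 1 - A 0 1 * A 1 0 = 1 := by rw [← det_fin_two]; exact A.det_coe
      have ha : A 0 0 ≠ 0 := by rintro ha; simp [ha, hc] at hdet
      simpa [coe_lower, vecMul, dotProduct, Fin.sum_univ_two, hc] using ha
    · exact ⟨0, by simpa using hc⟩
  obtain ⟨x, y, z, h⟩ := exists_eq_upper_mul_lower_mul_upper _ hw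
  refine ⟨-w, x, y, z, ?_⟩
  rw [mul_assoc, mul_assoc, ← mul_assoc (upper x), ← h, ← mul_assoc, ← lower_add, neg_add_cancel,
    lower_zero, one_mul]

end Matrix.SpecialLinearGroup

lemma Matrix.exists_mul_eq_one_add_smul_add_sq_smul {R m : Type*} [CommRing R] [Fintype m]
    [DecidableEq m] (r : R) {A A' X X' : Matrix m m R}
    (hA : ∃ C, A = 1 + r • X + r ^ 2 • C) (hA' : ∃ C, A' = 1 + r • X' + r ^ 2 • C) :
    ∃ C, A * A' = 1 + r • (X + X') + r ^ 2 • C := by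
  obtain ⟨C, rfl⟩ := hA
  obtain ⟨C', rfl⟩ := hA'
  refine ⟨C + C' + X * X' + r • (X * C' + C * X') + r ^ 2 • (C * C'), ?_⟩
  simp only [mul_add, add_mul, mul_one, one_mul, Matrix.smul_mul, Matrix.mul_smul, smul_smul,
    smul_add]
  module

open Matrix.SpecialLinearGroup

namespace CongruenceSubgroup

lemma mem_Gamma_iff_dvd {k : ℕ} {A : SL(2, ℤ)} :
    A ∈ Gamma k ↔ ∀ i j, (k : ℤ) ∣ A i j - (1 : Matrix (Fin 2) (Fin 2) ℤ) i j := by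
  simp only [Gamma_mem', Matrix.SpecialLinearGroup.ext_iff, SL_reduction_mod_hom_val]
  refine forall₂_congr fun i j => ?_
  rw [← ZMod.intCast_eq_intCast_iff_dvd_sub, eq_comm]
  fin_cases i <;> fin_cases j <;> simp

lemma mem_Gamma_iff_exists_eq_one_add_smul {k : ℕ} {A : SL(2, ℤ)} :
    A ∈ Gamma k ↔ ∃ B : Matrix (Fin 2) (Fin 2) ℤ, A.1 = 1 + (k : ℤ) • B := by
  rw [mem_Gamma_iff_dvd]
  constructor
  · intro h
    choose B hB using h
    exact ⟨Matrix.of B, by ext i j; simp [← hB]⟩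
  · rintro ⟨B, hB⟩ i j
    exact ⟨B i j, by
      rw [hB, Matrix.add_apply, Matrix.smul_apply, add_sub_cancel_left, smul_eq_mul]⟩

lemma Gamma_le_Gamma_of_dvd {a b : ℕ} (h : a ∣ b) : Gamma b ≤ Gamma a := fun _ hA =>
  mem_Gamma_iff_dvd.2 fun i j => (Int.natCast_dvd_natCast.2 h).trans (mem_Gamma_iff_dvd.1 hA i j)

lemma Gamma_inf_Gamma_le_of_coprime {a b : ℕ} (h : a.Coprime b) :
    Gamma a ⊓ Gamma b ≤ Gamma (a * b) := fun _ ⟨ha, hb⟩ =>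
  mem_Gamma_iff_dvd.2 fun i j => by
    simpa using (Nat.isCoprime_iff_coprime.2 h).mul_dvd (mem_Gamma_iff_dvd.1 ha i j)
      (mem_Gamma_iff_dvd.1 hb i j)

lemma upper_mem_Gamma (k : ℕ) (t : ℤ) : upper (k * t) ∈ Gamma k :=
  mem_Gamma_iff_exists_eq_one_add_smul.2 ⟨!![0, t; 0, 0], coe_upper_mul _ _⟩

lemma lower_mem_Gamma (k : ℕ) (t : ℤ) : lower (k * t) ∈ Gamma k :=
  mem_Gamma_iff_exists_eq_one_add_smul.2 ⟨!![0, 0; t, 0], coe_lower_mul _ _⟩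

lemma conj_T_pow_mem_Gamma (g : SL(2, ℤ)) (k : ℕ) : g * T ^ k * g⁻¹ ∈ Gamma k :=
  (Gamma_normal k).conj_mem _
    (by simpa [← zpow_natCast, ← upper_eq_T_zpow] using upper_mem_Gamma k 1) g

end CongruenceSubgroup

section Wohlfahrt

variable {H : Subgroup SL(2, ℤ)} {n : ℕ}

lemma conj_T_pow_mul_mem (hH : ∀ g, g * T ^ n * g⁻¹ ∈ H) (m : ℕ) (g : SL(2, ℤ)) :
    g * T ^ (n * m) * g⁻¹ ∈ H := by
  rw [pow_mul, ← conj_pow]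
  exact H.pow_mem (hH g) m

lemma conj_upper_mem (hH : ∀ g, g * T ^ n * g⁻¹ ∈ H) (g : SL(2, ℤ)) (t : ℤ) :
    g * upper (n * t) * g⁻¹ ∈ H := by
  rw [upper_eq_T_zpow, _root_.zpow_mul, zpow_natCast, ← conj_zpow]
  exact H.zpow_mem (hH g) t

lemma upper_mem (hH : ∀ g, g * T ^ n * g⁻¹ ∈ H) (t : ℤ) : upper (n * t) ∈ H := by
  simpa using conj_upper_mem hH 1 t

lemma lower_mem (hH : ∀ g, g * T ^ n * g⁻¹ ∈ H) (t : ℤ) : lower (n * t) ∈ H := by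
  rw [lower_eq_S_mul_upper_mul_S_inv, ← mul_neg]
  exact conj_upper_mem hH _ _

lemma exists_mem_inf_Gamma_map_eq {p : ℕ} (hp : p.Prime) (hpn : ¬ p ∣ n)
    (hH : ∀ g, g * T ^ n * g⁻¹ ∈ H) (A : SL(2, ℤ)) :
    ∃ E ∈ H ⊓ Gamma n, map (Int.castRingHom (ZMod p)) E = map (Int.castRingHom (ZMod p)) A := by
  have := Fact.mk hp
  have hn : (n : ZMod p) ≠ 0 := by rwa [Ne, ZMod.natCast_eq_zero_iff]
  have hlift : ∀ x : ZMod p, ∃ t : ℤ, Int.castRingHom (ZMod p) (n * t) = x := fun x =>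
    ⟨((n : ZMod p)⁻¹ * x).cast, by simp [hn]⟩
  have hmem : ∀ t : ℤ, upper (n * t) ∈ H ⊓ Gamma n ∧ lower (n * t) ∈ H ⊓ Gamma n := fun t =>
    ⟨⟨upper_mem hH t, upper_mem_Gamma n t⟩, ⟨lower_mem hH t, lower_mem_Gamma n t⟩⟩
  obtain ⟨w, x, y, z, hA⟩ :=
    exists_eq_lower_mul_upper_mul_lower_mul_upper (map (Int.castRingHom (ZMod p)) A)
  obtain ⟨tw, rfl⟩ := hlift w
  obtain ⟨tx, rfl⟩ := hlift x
  obtain ⟨ty, rfl⟩ := hlift y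
  obtain ⟨tz, rfl⟩ := hlift z
  refine ⟨lower (n * tw) * upper (n * tx) * lower (n * ty) * upper (n * tz), ?_, ?_⟩
  · exact mul_mem (mul_mem (mul_mem (hmem tw).2 (hmem tx).1) (hmem ty).2) (hmem tz).1
  · simp only [map_mul, map_upper, map_lower, hA]

lemma Gamma_le_of_Gamma_mul_prime_le {p : ℕ} (hp : p.Prime) (hpn : ¬ p ∣ n)
    (hH : ∀ g, g * T ^ n * g⁻¹ ∈ H) (h : Gamma (n * p) ≤ H) : Gamma n ≤ H := by
  intro A hA
  obtain ⟨E, hE, hEA⟩ := exists_mem_inf_Gamma_map_eq hp hpn hH A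
  obtain ⟨hEH, hEn⟩ := Subgroup.mem_inf.1 hE
  have hAE : A * E⁻¹ ∈ Gamma (n * p) := by
    refine Gamma_inf_Gamma_le_of_coprime (Nat.coprime_comm.1 (hp.coprime_iff_not_dvd.2 hpn))
      (Subgroup.mem_inf.2 ⟨mul_mem hA (inv_mem hEn), ?_⟩)
    rw [Gamma_mem', map_mul, map_inv, hEA, mul_inv_cancel]
  simpa using H.mul_mem (h hAE) hEH

lemma Gamma_le_of_Gamma_sq_le (hH : ∀ g, g * T ^ n * g⁻¹ ∈ H) (h : Gamma (n ^ 2) ≤ H) :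
    Gamma n ≤ H := by
  obtain rfl | hn := eq_or_ne n 0
  · simpa using h
  intro A hA
  obtain ⟨B, hB⟩ := mem_Gamma_iff_exists_eq_one_add_smul.1 hA
  have htrace : B 0 0 + B 1 1 = -n * B.det := by
    have hdet := A.det_coe
    rw [hB, det_fin_two] at hdet
    simp only [Matrix.add_apply, Matrix.smul_apply, smul_eq_mul, one_apply_eq, one_apply_ne, ne_eq,
      zero_ne_one, one_ne_zero, not_false_eq_true, zero_add] at hdet
    refine mul_left_cancel₀ (Int.natCast_ne_zero.2 hn) ?_
    rw [det_fin_two]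
    linear_combination hdet
  set W := lower 1 * upper (n * B 0 0) * (lower 1)⁻¹
  -- Modulo n² each factor of D is 1 + n • Y, and the Y's add up to diag(0, tr B) - B;
  -- det A = 1 makes tr B divisible by n.
  let D := upper (n * -(B 0 1 + B 0 0)) * lower (n * (B 0 0 - B 1 0)) * W
  have hD : D ∈ H := mul_mem (mul_mem (upper_mem hH _) (lower_mem hH _)) (conj_upper_mem hH _ _)
  obtain ⟨C, hC⟩ : ∃ C, (A * D).1 = 1 + (n : ℤ) • (B + !![0, -(B 0 1 + B 0 0); 0, 0] +
      !![0, 0; B 0 0 - B 1 0, 0] + !![-B 0 0, B 0 0; -B 0 0, B 0 0]) + (n : ℤ) ^ 2 • C := by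
    simp only [D, coe_mul, ← mul_assoc]
    refine exists_mul_eq_one_add_smul_add_sq_smul _ (exists_mul_eq_one_add_smul_add_sq_smul _
      (exists_mul_eq_one_add_smul_add_sq_smul _ ⟨0, by rw [hB, smul_zero, add_zero]⟩
      ⟨0, by rw [coe_upper_mul, smul_zero, add_zero]⟩)
      ⟨0, by rw [coe_lower_mul, smul_zero, add_zero]⟩)
      ⟨0, by rw [coe_lower_one_conj_upper_mul, smul_zero, add_zero]⟩
  have hAD : A * D ∈ Gamma (n ^ 2) := by
    refine mem_Gamma_iff_exists_eq_one_add_smul.2 ⟨C - !![0, 0; 0, B.det], ?_⟩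
    rw [hC]
    ext i j
    fin_cases i <;> fin_cases j <;>
      simp only [Matrix.add_apply, Matrix.smul_apply, Matrix.sub_apply, smul_eq_mul] <;> simp
    linear_combination (n : ℤ) * htrace
  simpa using H.mul_mem (h hAD) (H.inv_mem hD)

end Wohlfahrt

theorem Gamma_le_of_conj_T_pow_mem {H : Subgroup SL(2, ℤ)} {n q : ℕ}
    (hH : ∀ g, g * T ^ n * g⁻¹ ∈ H) (hq : q ≠ 0) (h : Gamma (n * q) ≤ H) : Gamma n ≤ H := by
  induction q using Nat.recOnMul generalizing n with
  | zero => exact absurd rfl hq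
  | one => simpa using h
  | prime p hp =>
    by_cases hpn : p ∣ n
    · exact Gamma_le_of_Gamma_sq_le hH
        ((Gamma_le_Gamma_of_dvd (by rw [sq]; exact mul_dvd_mul_left n hpn)).trans h)
    · exact Gamma_le_of_Gamma_mul_prime_le hp hpn hH h
  | mul a b iha ihb =>
    refine iha hH (left_ne_zero_of_mul hq) (ihb (conj_T_pow_mul_mem hH a)
      (right_ne_zero_of_mul hq) ?_)
    rwa [mul_assoc]

lemma Nat.eq_or_eq_two_mul_of_dvd_of_le {N L : ℕ} (hN : 0 < N) (hNL : N ∣ L) (hL : 0 < L)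
    (hL2 : L ≤ 2 * N) : L = N ∨ L = 2 * N := by
  obtain ⟨k, rfl⟩ := hNL
  have hk : k ≤ 2 := by nlinarith
  interval_cases k <;> simp_all [mul_comm]

theorem congruence_subgroup_level_general (Γ : Subgroup SL(2, ℤ))
    (hcong : IsCongruence Γ) (N : ℕ) (hN : IsGeneralLevel Γ N) :
    Gamma (2 * N) ≤ Γ ∧
      (sInf {M : ℕ | 0 < M ∧ Gamma M ≤ Γ} = N ∨
        sInf {M : ℕ | 0 < M ∧ Gamma M ≤ Γ} = 2 * N) := by
  obtain ⟨hN0, hwidth, hlcm⟩ := hN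
  obtain ⟨M, hM0, hM⟩ := hcong
  have hconj : ∀ g, g * T ^ (2 * N) * g⁻¹ ∈ Γ := fun g => by
    rw [mul_comm, pow_mul, ← conj_pow]
    exact Subgroup.sq_mem_of_mem_negClosure (conj_T_pow_mem_negClosure_iff.2 (hwidth g))
  have hle : Gamma (2 * N) ≤ Γ := Gamma_le_of_conj_T_pow_mem hconj hM0.ne'
    ((Gamma_le_Gamma_of_dvd (dvd_mul_left M _)).trans hM)
  refine ⟨hle, ?_⟩
  obtain ⟨hL0, hL⟩ := Nat.sInf_mem (s := {M | 0 < M ∧ Gamma M ≤ Γ}) ⟨2 * N, by omega, hle⟩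
  refine Nat.eq_or_eq_two_mul_of_dvd_of_le hN0 (hlcm _ fun g => ?_) hL0
    (Nat.sInf_le ⟨by omega, hle⟩)
  exact conj_T_pow_mem_negClosure_iff.1 (.inl (hL (conj_T_pow_mem_Gamma g _)))

/-- A congruence subgroup of general level N contains Γ(2N); consequently its
level (the least M with Γ(M) ≤ Γ) is N or 2N. -/
theorem congruence_subgroup_level (Γ : Subgroup SL(2, ℤ)) (hfi : Γ.FiniteIndex)
    (hcong : IsCongruence Γ) (N : ℕ) (hN : IsGeneralLevel Γ N) :
    Gamma (2 * N) ≤ Γ ∧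
      (sInf {M : ℕ | 0 < M ∧ Gamma M ≤ Γ} = N ∨
        sInf {M : ℕ | 0 < M ∧ Gamma M ≤ Γ} = 2 * N) :=
  congruence_subgroup_level_general Γ hcong N hN
end

section
/- Let N > 1 and suppose Γ̄(N) ≤ Γ̄ ≤ Γ̄₀(N) in PSL₂(ℤ). Then any congruence lift of Γ̄ to SL₂(ℤ) has level N or 2N (i.e., contains Γ(2N), and its least principal congruence subgroup has level N or 2N). -/
open Matrix CongruenceSubgroup
open scoped MatrixGroups

instance : (Subgroup.zpowers (-1 : SL(2, ℤ))).Normal where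
  conj_mem := by
    intro x hx g
    obtain ⟨k, rfl⟩ := hx
    have h : g * (-1 : SL(2, ℤ)) ^ k * g⁻¹ = (-1 : SL(2, ℤ)) ^ k := by
      rw [((Commute.neg_one_left g).zpow_left k).symm.eq, mul_inv_cancel_right]
    rw [h]
    exact Subgroup.zpow_mem _ (Subgroup.mem_zpowers _) k

/-- PSL₂(ℤ) = SL₂(ℤ)/{±I}. -/
abbrev PSL2Z := SL(2, ℤ) ⧸ Subgroup.zpowers (-1 : SL(2, ℤ))

/-- The canonical projection SL₂(ℤ) → PSL₂(ℤ). -/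
def proj : SL(2, ℤ) →* PSL2Z := QuotientGroup.mk' _

/-
For y ∈ Γ(N) the hypothesis Γ̄(N) ≤ Γ̄ gives ±y ∈ Γ, hence y² ∈ Γ. So the normal core of Γ
contains every transvection E₁₂(2Nm) = E₁₂(Nm)², and also some Γ(M). A normal subgroup of
SL₂(ℤ) containing Γ(M) and the transvections of level n contains Γ(n): a column operation by a
level-n transvection makes the corner entry of g ∈ Γ(n) prime to M, and modulo M such a matrix is
a product of level-n transvections and a conjugate of one. Hence Γ(2N) ≤ Γ.
Conversely Γ(M) ≤ Γ puts E₂₁(M) into ±Γ₀(N), so N ∣ M; the level is thus a multiple of N that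
is at most 2N.
-/

theorem Int.exists_isCoprime_add_mul {x y : ℤ} (h : IsCoprime x y) {L : ℕ} (hL : L ≠ 0) :
    ∃ t : ℤ, IsCoprime (x + t * y) L := by
  obtain rfl | hy := eq_or_ne y 0
  · exact ⟨0, by simpa using h.of_isCoprime_of_dvd_right (dvd_zero (L : ℤ))⟩
  have : NeZero (y.natAbs * L) := ⟨mul_ne_zero (Int.natAbs_ne_zero.mpr hy) hL⟩
  have hx : IsUnit (x : ZMod y.natAbs) := by
    rw [ZMod.coe_int_isUnit_iff_isCoprime, Int.natCast_natAbs, IsCoprime.abs_left_iff]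
    exact h.symm
  -- lift the unit `x` modulo `|y|` to a unit `z` modulo `|y| * L`
  obtain ⟨u, hu⟩ := ZMod.unitsMap_surjective (Dvd.intro L rfl) hx.unit
  set z : ℤ := ((u : ZMod (y.natAbs * L)).val : ℤ)
  have hz : IsCoprime z ((y.natAbs * L : ℕ) : ℤ) :=
    Nat.isCoprime_iff_coprime.mpr (ZMod.val_coe_unit_coprime u)
  have hzx : (x : ZMod y.natAbs) = z := by
    rw [← hx.unit_spec, ← hu, ZMod.unitsMap_val, ZMod.cast_eq_val]
    simp [z]
  obtain ⟨t, ht⟩ := Int.natAbs_dvd.mp ((ZMod.intCast_eq_intCast_iff_dvd_sub x z _).mp hzx)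
  refine ⟨t, ?_⟩
  rw [show x + t * y = z by linarith]
  exact hz.of_isCoprime_of_dvd_right (by push_cast; exact Dvd.intro_left _ rfl)

local notation "E₁₂" => Matrix.SpecialLinearGroup.transvection (zero_ne_one : (0 : Fin 2) ≠ 1)
local notation "E₂₁" => Matrix.SpecialLinearGroup.transvection (one_ne_zero : (1 : Fin 2) ≠ 0)

section Transvection

variable {R S : Type*} [CommRing R] [CommRing S]

lemma coe_E12 (x : R) : ((E₁₂ x : SL(2, R)) : Matrix (Fin 2) (Fin 2) R) = !![1, x; 0, 1] := by
  ext i j; fin_cases i <;> fin_cases j <;> simp [Matrix.SpecialLinearGroup.transvection_coe]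

lemma coe_E21 (x : R) : ((E₂₁ x : SL(2, R)) : Matrix (Fin 2) (Fin 2) R) = !![1, 0; x, 1] := by
  ext i j; fin_cases i <;> fin_cases j <;> simp [Matrix.SpecialLinearGroup.transvection_coe]

lemma map_transvection {ι : Type*} [Fintype ι] [DecidableEq ι] {i j : ι} (hij : i ≠ j)
    (f : R →+* S) (x : R) :
    Matrix.SpecialLinearGroup.map f (Matrix.SpecialLinearGroup.transvection hij x) =
      Matrix.SpecialLinearGroup.transvection hij (f x) := by
  ext a b
  simp [Matrix.SpecialLinearGroup.transvection_coe, Matrix.one_apply, Matrix.single_apply,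
    apply_ite f]

lemma eq_E21_mul_conj_mul_E12 (g : SL(2, R)) {u : R} (hu : g 0 0 * u = 1) :
    g = E₂₁ ((g 0 0 + g 1 0 - 1) * u) * ((E₂₁ 1)⁻¹ * E₁₂ (g 0 0 - 1) * E₂₁ 1) *
      E₁₂ ((g 0 1 - g 0 0 + 1) * u) := by
  have hdet : g 0 0 * g 1 1 - g 0 1 * g 1 0 = 1 := by
    rw [← Matrix.det_fin_two]; exact g.det_coe
  rw [Matrix.SpecialLinearGroup.transvection_inv]
  ext i j
  fin_cases i <;> fin_cases j <;>
    simp only [Matrix.SpecialLinearGroup.coe_mul, coe_E12, coe_E21, Matrix.mul_fin_two] <;> simp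
  · linear_combination (g 0 0 - g 0 1 - 1) * hu
  · linear_combination (1 - g 0 0 - g 1 0) * hu
  · linear_combination u * hdet + (2 - g 0 0 - g 1 1 -
      (g 0 0 + g 1 0 - 1) * (g 0 1 - g 0 0 + 1) * u) * hu

end Transvection

lemma S_mul_E12_mul_S_inv (x : ℤ) : ModularGroup.S * E₁₂ x * ModularGroup.S⁻¹ = E₂₁ (-x) := by
  ext i j
  simp [ModularGroup.coe_S, coe_E12, coe_E21, Matrix.adjugate_fin_two]

lemma transvection_mem_Gamma {i j : Fin 2} (hij : i ≠ j) {n : ℕ} {x : ℤ} (hx : (n : ℤ) ∣ x) :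
    Matrix.SpecialLinearGroup.transvection hij x ∈ Gamma n := by
  rw [Gamma_mem', map_transvection, eq_intCast, (ZMod.intCast_zmod_eq_zero_iff_dvd x n).mpr hx,
    Matrix.SpecialLinearGroup.transvection_coeff_zero]

lemma dvd_entries_of_mem_Gamma {n : ℕ} {g : SL(2, ℤ)} (hg : g ∈ Gamma n) :
    (n : ℤ) ∣ g 0 0 - 1 ∧ (n : ℤ) ∣ g 0 1 ∧ (n : ℤ) ∣ g 1 0 := by
  obtain ⟨h00, h01, h10, -⟩ := Gamma_mem.mp hg
  refine ⟨?_, (ZMod.intCast_zmod_eq_zero_iff_dvd _ n).mp h01,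
    (ZMod.intCast_zmod_eq_zero_iff_dvd _ n).mp h10⟩
  exact (ZMod.intCast_eq_intCast_iff_dvd_sub 1 _ n).mp (by simpa using h00.symm)

section NormalSubgroup

variable {H : Subgroup SL(2, ℤ)} [H.Normal] {n L : ℕ}

lemma E21_mem_of_E12_mem (hT : ∀ m : ℤ, E₁₂ (n * m) ∈ H) (m : ℤ) : E₂₁ (n * m) ∈ H := by
  have := ‹H.Normal›.conj_mem _ (hT (-m)) ModularGroup.S
  rwa [S_mul_E12_mul_S_inv, mul_neg, neg_neg] at this

lemma mem_of_mem_Gamma_of_isCoprime (hL : Gamma L ≤ H) (hT : ∀ m : ℤ, E₁₂ (n * m) ∈ H)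
    {g : SL(2, ℤ)} (hg : g ∈ Gamma n) (hcop : IsCoprime (g 0 0) L) : g ∈ H := by
  obtain ⟨h00, h01, h10⟩ := dvd_entries_of_mem_Gamma hg
  obtain ⟨u, v, huv⟩ := hcop
  set X := E₂₁ ((g 0 0 + g 1 0 - 1) * u) * ((E₂₁ 1)⁻¹ * E₁₂ (g 0 0 - 1) * E₂₁ 1) *
    E₁₂ ((g 0 1 - g 0 0 + 1) * u)
  have hX : X ∈ H := by
    obtain ⟨p, hp⟩ : (n : ℤ) ∣ g 0 0 + g 1 0 - 1 := by
      simpa [sub_add_eq_add_sub] using dvd_add h00 h10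
    obtain ⟨r, hr⟩ : (n : ℤ) ∣ g 0 1 - g 0 0 + 1 := by
      simpa [sub_add] using dvd_sub h01 h00
    obtain ⟨q, hq⟩ := h00
    refine H.mul_mem (H.mul_mem ?_ ?_) ?_
    · rw [hp, mul_assoc]; exact E21_mem_of_E12_mem hT _
    · simpa using ‹H.Normal›.conj_mem _ (hq ▸ hT q) (E₂₁ 1)⁻¹
    · rw [hr, mul_assoc]; exact hT _
  have hgX : g * X⁻¹ ∈ Gamma L := by
    rw [Gamma_mem', map_mul, map_inv, mul_inv_eq_one]
    have hu : (Matrix.SpecialLinearGroup.map (Int.castRingHom (ZMod L)) g) 0 0 * u = 1 := by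
      have := congrArg (Int.cast : ℤ → ZMod L) huv
      push_cast at this
      simpa [mul_comm] using this
    rw [eq_E21_mul_conj_mul_E12 _ hu]
    simp [X, map_transvection]
  simpa using H.mul_mem (hL hgX) hX

lemma Gamma_le_of_E12_mem (hL0 : L ≠ 0) (hL : Gamma L ≤ H) (hT : ∀ m : ℤ, E₁₂ (n * m) ∈ H) :
    Gamma n ≤ H := by
  intro g hg
  obtain ⟨⟨k, hk⟩, -, -⟩ := dvd_entries_of_mem_Gamma hg
  have hdet : g 0 0 * g 1 1 - g 0 1 * g 1 0 = 1 := by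
    rw [← Matrix.det_fin_two]; exact g.det_coe
  have hcop : IsCoprime (g 0 0) (n * g 0 1) :=
    IsCoprime.mul_right ⟨1, -k, by linear_combination hk⟩
      ⟨g 1 1, -g 1 0, by linear_combination hdet⟩
  obtain ⟨t, ht⟩ := Int.exists_isCoprime_add_mul hcop hL0
  have hgt : g * E₂₁ (n * t) ∈ H := by
    refine mem_of_mem_Gamma_of_isCoprime hL hT
      (mul_mem hg (transvection_mem_Gamma _ (dvd_mul_right _ _))) ?_
    convert ht using 1
    simp [coe_E21, Matrix.mul_apply, Fin.sum_univ_two]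
    ring
  simpa using H.mul_mem hgt (H.inv_mem (E21_mem_of_E12_mem hT t))

end NormalSubgroup

theorem Gamma_two_mul_le_of_mul_self_mem {N M : ℕ} {Γ : Subgroup SL(2, ℤ)} (hM : M ≠ 0)
    (hMΓ : Gamma M ≤ Γ) (hsq : ∀ y ∈ Gamma N, y * y ∈ Γ) : Gamma (2 * N) ≤ Γ := by
  have := Gamma_normal M
  refine (Gamma_le_of_E12_mem hM (Subgroup.normal_le_normalCore.mpr hMΓ) ?_).trans
    Γ.normalCore_le
  intro m b
  have hconj : b * E₁₂ (N * m) * b⁻¹ ∈ Gamma N :=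
    (Gamma_normal N).conj_mem _ (transvection_mem_Gamma _ (dvd_mul_right _ _)) b
  convert hsq _ hconj using 1
  rw [show ((2 * N : ℕ) : ℤ) * m = N * m + N * m by push_cast; ring,
    Matrix.SpecialLinearGroup.transvection_add]
  group

lemma mem_or_neg_mem_of_proj_mem_map {H : Subgroup SL(2, ℤ)} {x : SL(2, ℤ)}
    (hx : proj x ∈ H.map proj) : x ∈ H ∨ -x ∈ H := by
  obtain ⟨h, hh, hhx⟩ := hx
  obtain ⟨k, hk : (-1) ^ k = h⁻¹ * x⟩ := QuotientGroup.eq.mp hhx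
  rcases Int.even_or_odd k with hk' | hk'
  · rw [hk'.neg_one_zpow, eq_comm, inv_mul_eq_one] at hk
    exact .inl (hk ▸ hh)
  · rw [hk'.neg_one_zpow, eq_comm, inv_mul_eq_iff_eq_mul, mul_neg_one] at hk
    exact .inr (by rwa [hk, neg_neg])

lemma mul_self_mem_of_proj_mem_map {H : Subgroup SL(2, ℤ)} {x : SL(2, ℤ)}
    (hx : proj x ∈ H.map proj) : x * x ∈ H := by
  rcases mem_or_neg_mem_of_proj_mem_map hx with h | h
  · exact H.mul_mem h h
  · simpa using H.mul_mem h h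

lemma dvd_of_Gamma_le {N M : ℕ} {Γ : Subgroup SL(2, ℤ)}
    (hΓ : Γ.map proj ≤ (Gamma0 N).map proj) (hM : Gamma M ≤ Γ) : N ∣ M := by
  have hE : E₂₁ (M : ℤ) ∈ Γ := hM (transvection_mem_Gamma _ dvd_rfl)
  rw [← ZMod.natCast_eq_zero_iff]
  rcases mem_or_neg_mem_of_proj_mem_map (hΓ (Subgroup.mem_map_of_mem proj hE)) with h | h <;>
    simpa [coe_E21] using h

lemma sInf_eq_or_eq_two_mul {S : Set ℕ} {N : ℕ} (hS : ∀ m ∈ S, 0 < m ∧ N ∣ m)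
    (h2N : 2 * N ∈ S) :
    sInf S = N ∨ sInf S = 2 * N := by
  obtain ⟨hpos, k, hk⟩ := hS _ (Nat.sInf_mem ⟨_, h2N⟩)
  have hle : sInf S ≤ 2 * N := Nat.sInf_le h2N
  rw [hk] at hpos hle ⊢
  have hN : 0 < N := Nat.pos_of_mul_pos_right hpos
  have hk0 : 0 < k := Nat.pos_of_mul_pos_left hpos
  have hk2 : k ≤ 2 := le_of_mul_le_mul_left (by linarith) hN
  interval_cases k <;> simp [mul_comm]

/-- If Γ̄(N) ≤ Γ̄ ≤ Γ̄₀(N) with N > 1, then any congruence lift Γ of Γ̄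
contains Γ(2N) and has level N or 2N. -/
theorem congruence_lift_level (N : ℕ) (hN : 1 < N) (Γbar : Subgroup PSL2Z)
    (h1 : Subgroup.map proj (Gamma N) ≤ Γbar)
    (h2 : Γbar ≤ Subgroup.map proj (Gamma0 N))
    (Γ : Subgroup SL(2, ℤ)) (hlift : Subgroup.map proj Γ = Γbar)
    (hcong : IsCongruence Γ) :
    Gamma (2 * N) ≤ Γ ∧
      (sInf {M : ℕ | 0 < M ∧ Gamma M ≤ Γ} = N ∨
        sInf {M : ℕ | 0 < M ∧ Gamma M ≤ Γ} = 2 * N) := by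
  obtain ⟨M, hM, hMΓ⟩ := hcong
  have hsq : ∀ y ∈ Gamma N, y * y ∈ Γ := fun y hy =>
    mul_self_mem_of_proj_mem_map (hlift ▸ h1 (Subgroup.mem_map_of_mem proj hy))
  have h2N : Gamma (2 * N) ≤ Γ := Gamma_two_mul_le_of_mul_self_mem hM.ne' hMΓ hsq
  exact ⟨h2N, sInf_eq_or_eq_two_mul (fun m hm => ⟨hm.1, dvd_of_Gamma_le (hlift ▸ h2) hm.2⟩)
    ⟨by omega, h2N⟩⟩
end

section
/- Let N ∈ ℕ with 4 ∤ N and all odd prime divisors of N congruent to 1 mod 4. Then the only subgroup Γ ≤ SL₂(ℤ) whose image in PSL₂(ℤ) equals the image of Γ₀(N) is Γ₀(N) itself; in particular all lifts of the projective image of Γ₀(N) are congruence. -/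
open Matrix CongruenceSubgroup
open scoped MatrixGroups

/-!
Since `4 ∤ N` and every odd prime factor of `N` is `1 mod 4`, `-1` is a square mod `N`, say
`a² ≡ -1`. Then `g = [[a, 1], [-(a² + 1), -a]]` lies in `Γ₀(N)` and `g² = -1`. Any lift `Γ` contains
`±g`, whose square is `-1`; so `Γ` and `Γ₀(N)` both contain the kernel `{±1}` of the projection
and have the same image, hence coincide.
-/

theorem IsCyclic.isSquare_of_sq_eq_one {G : Type*} [Group G] [IsCyclic G]
    (h4 : 4 ∣ Nat.card G) {x : G} (hx : x ^ 2 = 1) : IsSquare x := by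
  obtain ⟨g, hg⟩ := IsCyclic.exists_generator (α := G)
  obtain ⟨j, rfl⟩ := Subgroup.mem_zpowers_iff.1 (hg x)
  have hdvd : (Nat.card G : ℤ) ∣ 2 * j := by
    rw [← orderOf_eq_card_of_forall_mem_zpowers hg, orderOf_dvd_iff_zpow_eq_one, mul_comm,
      _root_.zpow_mul, zpow_ofNat, hx]
  obtain ⟨k, rfl⟩ : 2 ∣ j := by
    have : (4 : ℤ) ∣ 2 * j := (Int.natCast_dvd_natCast.2 h4).trans hdvd
    omega
  exact ⟨g ^ k, by rw [← _root_.zpow_add, two_mul]⟩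

theorem ZMod.isSquare_neg_one_prime_pow {p : ℕ} (hp : p.Prime) (hp4 : p % 4 = 1) {n : ℕ}
    (hn : n ≠ 0) : IsSquare (-1 : ZMod (p ^ n)) := by
  have : NeZero (p ^ n) := ⟨pow_ne_zero n hp.ne_zero⟩
  have := ZMod.isCyclic_units_of_prime_pow p hp (by omega) n
  have h4 : 4 ∣ Nat.card (ZMod (p ^ n))ˣ := by
    rw [Nat.card_eq_fintype_card, ZMod.card_units_eq_totient, Nat.totient_prime_pow hp hn.bot_lt]
    exact Dvd.dvd.mul_left (by omega) _
  obtain ⟨u, hu⟩ := IsCyclic.isSquare_of_sq_eq_one h4 (x := -1) (by simp)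
  exact ⟨u, by simpa using congrArg Units.val hu⟩

theorem ZMod.isSquare_neg_one_of_not_four_dvd {N : ℕ} (h4 : ¬ 4 ∣ N)
    (hp : ∀ p : ℕ, p.Prime → p ∣ N → Odd p → p % 4 = 1) : IsSquare (-1 : ZMod N) := by
  induction N using Nat.recOnPosPrimePosCoprime with
  | zero => exact absurd (dvd_zero 4) h4
  | one => exact ⟨0, Subsingleton.elim _ _⟩
  | prime_pow p n hpp hn =>
    rcases hpp.eq_two_or_odd' with rfl | hodd
    · obtain rfl : n = 1 := by
        by_contra hn1
        exact h4 (pow_dvd_pow 2 (by omega : 2 ≤ n))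
      exact ⟨1, by decide⟩
    · exact isSquare_neg_one_prime_pow hpp (hp p hpp (dvd_pow_self p hn.ne') hodd) hn.ne'
  | coprime a b _ _ hab iha ihb =>
    exact isSquare_neg_one_mul hab
      (iha (fun h => h4 (h.mul_right b)) fun p hpp hpa => hp p hpp (hpa.mul_right b))
      (ihb (fun h => h4 (h.mul_left a)) fun p hpp hpb => hp p hpp (hpb.mul_left a))

theorem ker_proj : proj.ker = Subgroup.zpowers (-1 : SL(2, ℤ)) :=
  QuotientGroup.ker_mk' _

theorem mul_self_eq_of_proj_eq {x y : SL(2, ℤ)} (h : proj x = proj y) : x * x = y * y := by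
  obtain ⟨k, hk⟩ := Subgroup.mem_zpowers_iff.1 (QuotientGroup.eq.1 h)
  obtain rfl : y = x * (-1) ^ k := by rw [hk, mul_inv_cancel_left]
  rw [((Commute.neg_one_left x).zpow_left k).mul_mul_mul_comm, ← _root_.zpow_add,
    Even.neg_one_zpow ⟨k, rfl⟩, mul_one]

theorem neg_one_mem_of_map_proj_eq {Γ Γ' : Subgroup SL(2, ℤ)}
    (h : Γ.map proj = Γ'.map proj) {g : SL(2, ℤ)} (hg : g ∈ Γ') (hg2 : g * g = -1) :
    (-1 : SL(2, ℤ)) ∈ Γ := by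
  obtain ⟨y, hy, hyg⟩ : proj g ∈ Γ.map proj := h ▸ Subgroup.mem_map_of_mem proj hg
  rw [← hg2, ← mul_self_eq_of_proj_eq hyg]
  exact Γ.mul_mem hy hy

theorem eq_of_map_proj_eq {Γ Γ' : Subgroup SL(2, ℤ)} (h : Γ.map proj = Γ'.map proj)
    (hΓ : (-1 : SL(2, ℤ)) ∈ Γ) (hΓ' : (-1 : SL(2, ℤ)) ∈ Γ') : Γ = Γ' :=
  Subgroup.map_injective_of_ker_le proj (ker_proj ▸ Subgroup.zpowers_le.2 hΓ :)
    (ker_proj ▸ Subgroup.zpowers_le.2 hΓ' :) h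

theorem exists_mem_Gamma0_mul_self_eq_neg_one {N : ℕ} (h : IsSquare (-1 : ZMod N)) :
    ∃ g ∈ Gamma0 N, g * g = -1 := by
  obtain ⟨x, hx⟩ := h
  obtain ⟨a, rfl⟩ := ZMod.intCast_surjective x
  let g : SL(2, ℤ) := ⟨!![a, 1; -(a ^ 2 + 1), -a], by rw [det_fin_two_of]; ring⟩
  refine ⟨g, ?_, ?_⟩
  · change ((-(a ^ 2 + 1) : ℤ) : ZMod N) = 0
    push_cast
    linear_combination hx
  · ext i j
    rw [Matrix.SpecialLinearGroup.coe_mul]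
    fin_cases i <;> fin_cases j <;> simp [g, mul_apply, Fin.sum_univ_two] <;> ring

/-- If 4 ∤ N and all odd prime divisors of N are ≡ 1 mod 4, then the only
subgroup of SL₂(ℤ) with the same projective image as Γ₀(N) is Γ₀(N) itself;
in particular all lifts of the projective image of Γ₀(N) are congruence. -/
theorem all_lifts_of_gamma0_congruence (N : ℕ) (h4 : ¬ (4 ∣ N))
    (hp : ∀ p : ℕ, p.Prime → p ∣ N → Odd p → p % 4 = 1)
    (Γ : Subgroup SL(2, ℤ))
    (hlift : Subgroup.map proj Γ = Subgroup.map proj (Gamma0 N)) :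
    Γ = Gamma0 N ∧ IsCongruence Γ := by
  obtain ⟨g, hg, hg2⟩ :=
    exists_mem_Gamma0_mul_self_eq_neg_one (ZMod.isSquare_neg_one_of_not_four_dvd h4 hp)
  have hΓ : Γ = Gamma0 N := eq_of_map_proj_eq hlift (neg_one_mem_of_map_proj_eq hlift hg hg2)
    (by simp [Gamma0_mem])
  have : NeZero N := ⟨by rintro rfl; exact h4 (dvd_zero 4)⟩
  obtain ⟨M, hM, hle⟩ := Gamma0_is_congruence N
  exact ⟨hΓ, M, Nat.pos_of_ne_zero hM, hΓ ▸ hle⟩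
end
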